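/- The three-qubit GHZ state |GHZ⟩ = (|000⟩+|111⟩)/√2 is not a virtual quantum Markov chain in order A↔B↔C: there is no Hermitian-preserving trace-preserving map R on system B with (id_A ⊗ R)(tr_C |GHZ⟩⟨GHZ|) = |GHZ⟩⟨GHZ|. -/
import Mathlib


open Matrix BigOperators
open scoped ComplexOrder

/-- The block `Q_BC^(ij) = ⟨i|_A ρ_ABC |j⟩_A` of a tripartite operator. -/
noncomputable def QBC {dA dB dC : ℕ}
    (ρ : Matrix (Fin dA × Fin dB × Fin dC) (Fin dA × Fin dB × Fin dC) ℂ)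
    (i j : Fin dA) : Matrix (Fin dB × Fin dC) (Fin dB × Fin dC) ℂ :=
  Matrix.of fun bc bc' => ρ (i, bc.1, bc.2) (j, bc'.1, bc'.2)

/-- The block `Q_B^(ij) = ⟨i|_A (tr_C ρ_ABC) |j⟩_A`. -/
noncomputable def QB {dA dB dC : ℕ}
    (ρ : Matrix (Fin dA × Fin dB × Fin dC) (Fin dA × Fin dB × Fin dC) ℂ)
    (i j : Fin dA) : Matrix (Fin dB) (Fin dB) ℂ :=
  Matrix.of fun b b' => ∑ c : Fin dC, ρ (i, b, c) (j, b', c)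

/-- A linear, Hermitian-preserving and trace-preserving map from system `B` to `B ⊗ C`. -/
def IsHPTP {dB dC : ℕ}
    (R : Matrix (Fin dB) (Fin dB) ℂ → Matrix (Fin dB × Fin dC) (Fin dB × Fin dC) ℂ) : Prop :=
  IsLinearMap ℂ R ∧ (∀ M, R Mᴴ = (R M)ᴴ) ∧ (∀ M, (R M).trace = M.trace)

/-- The virtual quantum Markov chain criterion `ker [Q_B] ⊆ ker [Q_BC]`. -/
def IsVQMC {dA dB dC : ℕ}
    (ρ : Matrix (Fin dA × Fin dB × Fin dC) (Fin dA × Fin dB × Fin dC) ℂ) : Prop :=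
  ∀ c : Fin dA → Fin dA → ℂ,
    (∑ i, ∑ j, c i j • QB ρ i j) = 0 → (∑ i, ∑ j, c i j • QBC ρ i j) = 0

/-- Outer product `|v⟩⟨v|` of a three-qubit vector. -/
noncomputable def outer (v : Fin 2 × Fin 2 × Fin 2 → ℂ) :
    Matrix (Fin 2 × Fin 2 × Fin 2) (Fin 2 × Fin 2 × Fin 2) ℂ :=
  Matrix.of fun x y => v x * star (v y)

/-- The three-qubit GHZ state `(|000⟩ + |111⟩)/√2`. -/
noncomputable def ghz : Fin 2 × Fin 2 × Fin 2 → ℂ :=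
  fun x => if x = (0,0,0) ∨ x = (1,1,1) then (1 / Real.sqrt 2 : ℝ) else 0

/-- the GHZ state is not a virtual quantum Markov chain: no HPTP map `R` on
system `B` satisfies `(id_A ⊗ R)(tr_C |GHZ⟩⟨GHZ|) = |GHZ⟩⟨GHZ|` (blockwise:
`R (Q_B^(ij)) = Q_BC^(ij)`). -/
theorem ghz_not_vqmc :
    ¬ ∃ R : Matrix (Fin 2) (Fin 2) ℂ → Matrix (Fin 2 × Fin 2) (Fin 2 × Fin 2) ℂ,
        IsHPTP R ∧ ∀ i j, R (QB (outer ghz) i j) = QBC (outer ghz) i j := by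
  rintro ⟨R, ⟨hlin, -, -⟩, hR⟩
  have hQB : QB (outer ghz) 0 1 = 0 := by
    ext b b'
    simp only [QB, outer, ghz, Matrix.of_apply, Matrix.zero_apply]
    apply Finset.sum_eq_zero
    intro c _
    fin_cases b <;> fin_cases b' <;> fin_cases c <;> simp
  have h0 : R (QB (outer ghz) 0 1) = 0 := by
    rw [hQB]; exact (hlin.mk' R).map_zero
  have h := hR 0 1
  rw [h0] at h
  have := congrFun (congrFun h.symm ((0:Fin 2), (0:Fin 2))) ((1:Fin 2), (1:Fin 2))
  simp only [QBC, outer, ghz, Matrix.of_apply, Matrix.zero_apply] at this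
  norm_num at this
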